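/- arXiv:0807.2185 — 3 statements merged into one kernel-verified Lean document; each statement's English description precedes it below -/
import Mathlib

section
/- Let I, J, K be monomial ideals in R = k[x_1,...,x_n] with I = J + K and G(I) the disjoint union of G(J) and G(K). If for all homological degrees i and all multidegrees j, β_{i,j}(J ∩ K) > 0 implies β_{i,j}(J) = β_{i,j}(K) = 0, then β_{i,j}(I) = β_{i,j}(J) + β_{i,j}(K) + β_{i-1,j}(J ∩ K) for all i and j. -/
set_option linter.unusedSectionVars false
set_option maxHeartbeats 1000000
set_option synthInstance.maxHeartbeats 200000

open MvPolynomial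

variable (k : Type*) [Field k] (σ : Type*) [Fintype σ] [DecidableEq σ] [LinearOrder σ]

/-- The Koszul differential on chains `c : Finset σ → R`. -/
noncomputable def koszulD :
    (Finset σ → MvPolynomial σ k) →ₗ[k] (Finset σ → MvPolynomial σ k) where
  toFun c := fun S => ∑ t ∈ Sᶜ,
    (-1 : MvPolynomial σ k) ^ (S.filter (fun s => s < t)).card * (X t * c (insert t S))
  map_add' c d := by
    funext S
    simp [mul_add, Finset.sum_add_distrib]
  map_smul' a c := by
    funext S
    simp [Finset.smul_sum, mul_smul_comm]

/-- The multidegree-`j` piece of the `i`-th term of the Koszul complex tensored with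
the ideal `I`: functions assigning to each `i`-element subset `S` of the variables an
element of `I` that is homogeneous of multidegree `j - deg S`. -/
noncomputable def kChain (I : Ideal (MvPolynomial σ k)) (i : ℕ) (j : σ →₀ ℕ) :
    Submodule k (Finset σ → MvPolynomial σ k) where
  carrier := {c | ∀ S : Finset σ,
    (S.card ≠ i → c S = 0) ∧ c S ∈ I ∧
    ∀ m ∈ (c S).support, m + ∑ t ∈ S, Finsupp.single t 1 = j}
  zero_mem' := by intro S; simp
  add_mem' := by
    intro c d hc hd S
    refine ⟨fun h => by simp [ (hc S).1 h, (hd S).1 h], I.add_mem (hc S).2.1 (hd S).2.1,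
      fun m hm => ?_⟩
    rcases Finset.mem_union.mp (MvPolynomial.support_add hm) with h | h
    · exact (hc S).2.2 m h
    · exact (hd S).2.2 m h
  smul_mem' := by
    intro a c hc S
    refine ⟨fun h => by simp [(hc S).1 h], I.smul_of_tower_mem a (hc S).2.1,
      fun m hm => (hc S).2.2 m (MvPolynomial.support_smul hm)⟩

/-- Koszul cycles in homological degree `i`, multidegree `j`. -/
noncomputable def koszulCycles (I : Ideal (MvPolynomial σ k)) (i : ℕ) (j : σ →₀ ℕ) :
    Submodule k (Finset σ → MvPolynomial σ k) :=
  kChain k σ I i j ⊓ LinearMap.ker (koszulD k σ)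

/-- The multidegree-`j` piece of `Tor_i(k, I)`, computed as Koszul homology. -/
noncomputable abbrev koszulHomology (I : Ideal (MvPolynomial σ k)) (i : ℕ) (j : σ →₀ ℕ) :=
  ↥(koszulCycles k σ I i j) ⧸
    (Submodule.comap (koszulCycles k σ I i j).subtype
      ((kChain k σ I (i + 1) j).map (koszulD k σ)))

/-- The multigraded Betti number `β_{i,j}(I) = dim_k Tor_i(k,I)_j`. -/
noncomputable def bettiNumber (I : Ideal (MvPolynomial σ k)) (i : ℕ) (j : σ →₀ ℕ) : ℕ :=
  Module.finrank k (koszulHomology k σ I i j)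

/-- The graded Betti number `β_{i,d}(I)`, the sum of the multigraded Betti numbers over
all multidegrees of total degree `d`. -/
noncomputable def bettiNumberGr (I : Ideal (MvPolynomial σ k)) (i : ℕ) (d : ℕ) : ℕ :=
  ∑ᶠ j ∈ {j : σ →₀ ℕ | (j.sum fun _ e => e) = d}, bettiNumber k σ I i j

/-- The total Betti number `β_i(I)`. -/
noncomputable def bettiTotal (I : Ideal (MvPolynomial σ k)) (i : ℕ) : ℕ :=
  ∑ᶠ j : σ →₀ ℕ, bettiNumber k σ I i j

/-- A monomial ideal. -/
def IsMonomialIdeal (I : Ideal (MvPolynomial σ k)) : Prop :=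
  ∃ S : Set (σ →₀ ℕ), I = Ideal.span ((fun m => (monomial m (1 : k) : MvPolynomial σ k)) '' S)

/-- The exponent vectors of the unique minimal monomial generating set `G(I)` of a
monomial ideal: monomials of `I` none of whose proper divisors lies in `I`. -/
def minGens (I : Ideal (MvPolynomial σ k)) : Set (σ →₀ ℕ) :=
  {m | (monomial m (1 : k) : MvPolynomial σ k) ∈ I ∧
    ∀ m' : σ →₀ ℕ, m' ≤ m → m' ≠ m → (monomial m' (1 : k) : MvPolynomial σ k) ∉ I}

section BS
variable {k : Type*} [Field k] {σ : Type*} [Fintype σ] [DecidableEq σ] [LinearOrder σ]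

/-- degree of a squarefree set of variables -/
noncomputable def bsDeg (S : Finset σ) : σ →₀ ℕ := ∑ t ∈ S, Finsupp.single t 1

lemma bs_mem_eq {j d m : σ →₀ ℕ} (h : m + d = j) : m = j - d := eq_tsub_of_add_eq h

/-- a polynomial whose support is concentrated in one monomial -/
lemma bs_rep {j d : σ →₀ ℕ} (p : MvPolynomial σ k) (h : ∀ m ∈ p.support, m + d = j) :
    p = (MvPolynomial.coeff (j - d) p) • (monomial (j - d) (1 : k)) := by
  ext m'
  rw [coeff_smul, coeff_monomial]
  by_cases hm : m' = j - d
  · subst hm; rw [if_pos rfl]; simp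
  · rw [if_neg (fun h' : j - d = m' => hm h'.symm), smul_zero]
    by_contra hc
    exact hm (bs_mem_eq (h m' (mem_support_iff.mpr hc)))
end BS

section BS2
variable {k : Type*} [Field k] {σ : Type*} [Fintype σ] [DecidableEq σ] [LinearOrder σ]
variable {I J K : Ideal (MvPolynomial σ k)} {i : ℕ} {j : σ →₀ ℕ}

lemma mem_kChain_iff {c : Finset σ → MvPolynomial σ k} :
    c ∈ kChain k σ I i j ↔ ∀ S : Finset σ,
      (S.card ≠ i → c S = 0) ∧ c S ∈ I ∧
      ∀ m ∈ (c S).support, m + bsDeg S = j := Iff.rfl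

lemma kChain_apply_rep {c : Finset σ → MvPolynomial σ k} (hc : c ∈ kChain k σ I i j)
    (S : Finset σ) :
    c S = (MvPolynomial.coeff (j - bsDeg S) (c S)) • (monomial (j - bsDeg S) (1 : k)) :=
  bs_rep _ ((mem_kChain_iff.mp hc S).2.2)

/-- if the component is nonzero then the corresponding monomial lies in the ideal -/
lemma kChain_monomial_mem {c : Finset σ → MvPolynomial σ k} (hc : c ∈ kChain k σ I i j)
    (S : Finset σ) (h : c S ≠ 0) : (monomial (j - bsDeg S) (1 : k) : MvPolynomial σ k) ∈ I := by
  set a := MvPolynomial.coeff (j - bsDeg S) (c S) with ha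
  have hrep := kChain_apply_rep hc S
  have haz : a ≠ 0 := by
    intro h0
    exact h (by rw [hrep, ← ha, h0, zero_smul])
  have : (monomial (j - bsDeg S) (1 : k) : MvPolynomial σ k) = a⁻¹ • c S := by
    rw [hrep, ← ha, smul_smul, inv_mul_cancel₀ haz, one_smul]
  rw [this, MvPolynomial.smul_eq_C_mul]
  exact Ideal.mul_mem_left _ _ (mem_kChain_iff.mp hc S).2.1

lemma kChain_mono (h : J ≤ I) : kChain k σ J i j ≤ kChain k σ I i j := by
  intro c hc
  exact fun S => ⟨(hc S).1, h (hc S).2.1, (hc S).2.2⟩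

lemma kChain_inf : kChain k σ (J ⊓ K) i j = kChain k σ J i j ⊓ kChain k σ K i j := by
  ext c
  constructor
  · intro hc
    exact ⟨fun S => ⟨(hc S).1, (hc S).2.1.1, (hc S).2.2⟩,
           fun S => ⟨(hc S).1, (hc S).2.1.2, (hc S).2.2⟩⟩
  · rintro ⟨h1, h2⟩ S
    exact ⟨(h1 S).1, ⟨(h1 S).2.1, (h2 S).2.1⟩, (h1 S).2.2⟩

end BS2

section BS3
variable {k : Type*} [Field k] {σ : Type*} [Fintype σ] [DecidableEq σ] [LinearOrder σ]
variable {I J K : Ideal (MvPolynomial σ k)} {i : ℕ} {j : σ →₀ ℕ}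

lemma monomial_mem_sup (hJ : IsMonomialIdeal k σ J) (hK : IsMonomialIdeal k σ K) {μ : σ →₀ ℕ} :
    (monomial μ (1 : k) : MvPolynomial σ k) ∈ J + K ↔
      (monomial μ (1 : k) : MvPolynomial σ k) ∈ J ∨ (monomial μ (1 : k) : MvPolynomial σ k) ∈ K := by
  obtain ⟨SJ, rfl⟩ := hJ
  obtain ⟨SK, rfl⟩ := hK
  have hsup : (monomial μ (1 : k) : MvPolynomial σ k).support = {μ} := by
    classical
    rw [support_monomial, if_neg one_ne_zero]
  have hunion : Ideal.span ((fun m => (monomial m (1 : k) : MvPolynomial σ k)) '' SJ) +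
      Ideal.span ((fun m => (monomial m (1 : k) : MvPolynomial σ k)) '' SK) =
      Ideal.span ((fun m => (monomial m (1 : k) : MvPolynomial σ k)) '' (SJ ∪ SK)) := by
    rw [Set.image_union, Ideal.span_union]
    rfl
  rw [hunion, mem_ideal_span_monomial_image, mem_ideal_span_monomial_image,
    mem_ideal_span_monomial_image]
  simp only [hsup, Finset.mem_singleton, forall_eq, Set.mem_union]
  constructor
  · rintro ⟨s, (hs | hs), hle⟩
    · exact Or.inl ⟨s, hs, hle⟩
    · exact Or.inr ⟨s, hs, hle⟩
  · rintro (⟨s, hs, hle⟩ | ⟨s, hs, hle⟩)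
    · exact ⟨s, Or.inl hs, hle⟩
    · exact ⟨s, Or.inr hs, hle⟩

open Classical in
/-- the projection keeping the components whose monomial lies in `J` -/
noncomputable def bsProj (J : Ideal (MvPolynomial σ k)) (j : σ →₀ ℕ) :
    (Finset σ → MvPolynomial σ k) →ₗ[k] (Finset σ → MvPolynomial σ k) where
  toFun c := fun S =>
    if (monomial (j - bsDeg S) (1 : k) : MvPolynomial σ k) ∈ J then c S else 0
  map_add' c d := by
    funext S
    by_cases h : (monomial (j - bsDeg S) (1 : k) : MvPolynomial σ k) ∈ J <;> simp [h]
  map_smul' a c := by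
    funext S
    by_cases h : (monomial (j - bsDeg S) (1 : k) : MvPolynomial σ k) ∈ J <;> simp [h]

lemma bsProj_mem (hc : c ∈ kChain k σ I i j) : bsProj J j c ∈ kChain k σ J i j := by
  intro S
  refine ⟨fun h => ?_, ?_, fun m hm => ?_⟩
  · simp only [bsProj, LinearMap.coe_mk, AddHom.coe_mk]
    rw [(hc S).1 h]; split <;> rfl
  · simp only [bsProj, LinearMap.coe_mk, AddHom.coe_mk]
    split
    · next h =>
      rw [kChain_apply_rep hc S]
      exact Submodule.smul_of_tower_mem _ _ h
    · exact Ideal.zero_mem _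
  · simp only [bsProj, LinearMap.coe_mk, AddHom.coe_mk] at hm
    split at hm
    · exact (hc S).2.2 m hm
    · simp at hm

lemma bsProj_eq_self (hc : c ∈ kChain k σ J i j) : bsProj J j c = c := by
  funext S
  simp only [bsProj, LinearMap.coe_mk, AddHom.coe_mk]
  split
  · rfl
  · next h =>
    by_contra h0
    exact h (kChain_monomial_mem hc S (fun hz => h0 (by rw [hz])))

lemma bsProj_compl_mem (hJ : IsMonomialIdeal k σ J) (hK : IsMonomialIdeal k σ K)
    (hc : c ∈ kChain k σ (J + K) i j) : c - bsProj J j c ∈ kChain k σ K i j := by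
  intro S
  have hsupp : ∀ m ∈ ((c - bsProj J j c) S).support, m + bsDeg S = j := by
    intro m hm
    simp only [Pi.sub_apply, bsProj, LinearMap.coe_mk, AddHom.coe_mk] at hm
    split at hm
    · simp at hm
    · rw [sub_zero] at hm
      exact (hc S).2.2 m hm
  refine ⟨fun h => ?_, ?_, hsupp⟩
  · simp only [Pi.sub_apply, bsProj, LinearMap.coe_mk, AddHom.coe_mk, (hc S).1 h]
    split <;> simp
  · simp only [Pi.sub_apply, bsProj, LinearMap.coe_mk, AddHom.coe_mk]
    split
    · simp
    · next h =>
      rw [sub_zero]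
      by_cases h0 : c S = 0
      · rw [h0]; exact Ideal.zero_mem _
      · have := kChain_monomial_mem hc S h0
        rcases (monomial_mem_sup hJ hK).mp this with hmJ | hmK
        · exact absurd hmJ h
        · rw [kChain_apply_rep hc S]
          exact Submodule.smul_of_tower_mem _ _ hmK

lemma bsProj_inf_mem (hc : c ∈ kChain k σ K i j) : bsProj J j c ∈ kChain k σ (J ⊓ K) i j := by
  rw [kChain_inf]
  exact ⟨bsProj_mem hc, by
    have : ∀ S, (bsProj J j c) S = c S ∨ (bsProj J j c) S = 0 := by
      intro S
      simp only [bsProj, LinearMap.coe_mk, AddHom.coe_mk]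
      split
      · exact Or.inl rfl
      · exact Or.inr rfl
    intro S
    rcases this S with h | h <;> rw [h]
    · exact ⟨fun hh => (hc S).1 hh |>.symm ▸ (hc S).1 hh, (hc S).2.1, (hc S).2.2⟩
    · simp⟩

end BS3

section BS4
variable {k : Type*} [Field k] {σ : Type*} [Fintype σ] [DecidableEq σ] [LinearOrder σ]
variable {I J K : Ideal (MvPolynomial σ k)} {i : ℕ} {j : σ →₀ ℕ}
variable {c : Finset σ → MvPolynomial σ k}

lemma koszulD_apply (c : Finset σ → MvPolynomial σ k) (S : Finset σ) :
    koszulD k σ c S = ∑ t ∈ Sᶜ,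
      (-1 : MvPolynomial σ k) ^ (S.filter (fun s => s < t)).card *
        (X t * c (insert t S)) := rfl

lemma bsDeg_insert {t : σ} {S : Finset σ} (ht : t ∉ S) :
    bsDeg (insert t S) = Finsupp.single t 1 + bsDeg S := by
  rw [bsDeg, Finset.sum_insert ht]; rfl

lemma koszulD_mem_kChain (hc : c ∈ kChain k σ I (i + 1) j) :
    koszulD k σ c ∈ kChain k σ I i j := by
  intro S
  refine ⟨fun h => ?_, ?_, fun m hm => ?_⟩
  · rw [koszulD_apply]
    refine Finset.sum_eq_zero fun t ht => ?_
    have : (insert t S).card ≠ i + 1 := by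
      rw [Finset.card_insert_of_notMem (Finset.mem_compl.mp ht)]
      omega
    rw [(hc (insert t S)).1 this, mul_zero, mul_zero]
  · rw [koszulD_apply]
    exact Ideal.sum_mem _ fun t ht =>
      Ideal.mul_mem_left _ _ (Ideal.mul_mem_left _ _ (hc (insert t S)).2.1)
  · rw [koszulD_apply] at hm
    have := MvPolynomial.support_sum hm
    rw [Finset.mem_biUnion] at this
    obtain ⟨t, ht, hmt⟩ := this
    have htS : t ∉ S := Finset.mem_compl.mp ht
    -- strip the sign
    have hsub : m ∈ (X t * c (insert t S)).support := by
      rcases neg_one_pow_eq_or (MvPolynomial σ k) (S.filter (fun s => s < t)).card with h1 | h1 <;>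
        rw [h1] at hmt
      · rwa [one_mul] at hmt
      · rw [neg_one_mul] at hmt
        rwa [MvPolynomial.support_neg] at hmt
    rw [support_X_mul, Finset.mem_map] at hsub
    obtain ⟨m', hm', rfl⟩ := hsub
    have := (hc (insert t S)).2.2 m' hm'
    rw [Finset.sum_insert htS] at this
    rw [← this, addLeftEmbedding_apply]
    abel

lemma koszulD_zero_chain (hc : c ∈ kChain k σ I 0 j) : koszulD k σ c = 0 := by
  funext S
  rw [koszulD_apply]
  refine Finset.sum_eq_zero fun t ht => ?_
  have : (insert t S).card ≠ 0 := by
    rw [Finset.card_insert_of_notMem (Finset.mem_compl.mp ht)]; omega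
  rw [(hc (insert t S)).1 this, mul_zero, mul_zero]

lemma koszulD_koszulD (c : Finset σ → MvPolynomial σ k) :
    koszulD k σ (koszulD k σ c) = 0 := by
  funext S
  rw [koszulD_apply]
  have expand : ∀ t ∈ Sᶜ,
      (-1 : MvPolynomial σ k) ^ (S.filter (fun s => s < t)).card *
        (X t * koszulD k σ c (insert t S)) =
      ∑ u ∈ Sᶜ.erase t,
        (-1 : MvPolynomial σ k) ^ (S.filter (fun s => s < t)).card *
          (X t * ((-1 : MvPolynomial σ k) ^ ((insert t S).filter (fun s => s < u)).card *
            (X u * c (insert u (insert t S))))) := by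
    intro t ht
    rw [koszulD_apply, Finset.compl_insert, Finset.mul_sum, Finset.mul_sum]
  rw [Finset.sum_congr rfl expand, Finset.sum_sigma', Pi.zero_apply]
  refine Finset.sum_involution (fun p _ => ⟨p.2, p.1⟩) ?_ ?_ ?_ ?_
  · rintro ⟨t, u⟩ hp
    simp only [Finset.mem_sigma, Finset.mem_erase] at hp
    obtain ⟨ht, hut, hu⟩ := hp
    have htS : t ∉ S := Finset.mem_compl.mp ht
    have huS : u ∉ S := Finset.mem_compl.mp hu
    have hcomm : insert u (insert t S) = insert t (insert u S) := Finset.insert_comm u t S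
    have hfil : ∀ a b : σ, a ∉ S → a ≠ b →
        ((insert a S).filter (fun s => s < b)).card =
          (S.filter (fun s => s < b)).card + (if a < b then 1 else 0) := by
      intro a b haS hab
      have hnotmem : a ∉ S.filter (fun s => s < b) :=
        fun hmem => haS (Finset.mem_filter.mp hmem).1
      by_cases hab2 : a < b <;>
        simp [Finset.filter_insert, hab2, Finset.card_insert_of_notMem hnotmem]
    rw [hcomm, hfil t u htS (Ne.symm hut), hfil u t huS hut]
    rcases lt_or_gt_of_ne (Ne.symm hut) with hlt | hgt
    · rw [if_pos hlt, if_neg (not_lt.mpr hlt.le)]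
      ring
    · rw [if_neg (not_lt.mpr hgt.le), if_pos hgt]
      ring
  · rintro ⟨t, u⟩ hp _
    simp only [Finset.mem_sigma, Finset.mem_erase] at hp
    intro heq
    have : u = t := congrArg Sigma.fst heq
    exact hp.2.1 this
  · rintro ⟨t, u⟩ hp
    simp only [Finset.mem_sigma, Finset.mem_erase] at hp ⊢
    obtain ⟨ht, hut, hu⟩ := hp
    exact ⟨hu, ⟨Ne.symm hut, ht⟩⟩
  · rintro ⟨t, u⟩ _
    rfl

end BS4

section BS5
variable {k : Type*} [Field k] {σ : Type*} [Fintype σ] [DecidableEq σ] [LinearOrder σ]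
variable {I J K : Ideal (MvPolynomial σ k)} {i : ℕ} {j : σ →₀ ℕ}

/-- the embedding of coefficient data into chains -/
noncomputable def bsEmb (j : σ →₀ ℕ) :
    (Finset σ → k) →ₗ[k] (Finset σ → MvPolynomial σ k) where
  toFun a := fun S => a S • monomial (j - bsDeg S) (1 : k)
  map_add' a b := by funext S; simp [add_smul]
  map_smul' r a := by funext S; simp [mul_smul]

lemma kChain_le_range_bsEmb : kChain k σ I i j ≤ LinearMap.range (bsEmb (k := k) (σ := σ) j) := by
  intro c hc
  exact ⟨fun S => MvPolynomial.coeff (j - bsDeg S) (c S),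
    by funext S; exact (kChain_apply_rep hc S).symm⟩

instance kChain_finiteDimensional (I : Ideal (MvPolynomial σ k)) (i : ℕ) (j : σ →₀ ℕ) :
    FiniteDimensional k (kChain k σ I i j) :=
  Submodule.finiteDimensional_of_le (kChain_le_range_bsEmb)

instance koszulCycles_finiteDimensional (I : Ideal (MvPolynomial σ k)) (i : ℕ) (j : σ →₀ ℕ) :
    FiniteDimensional k (koszulCycles k σ I i j) :=
  Submodule.finiteDimensional_of_le
    (le_trans inf_le_left (kChain_le_range_bsEmb))

instance koszulBoundaries_finiteDimensional (I : Ideal (MvPolynomial σ k)) (i : ℕ) (j : σ →₀ ℕ) :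
    FiniteDimensional k (Submodule.map (koszulD k σ) (kChain k σ I (i + 1) j)) :=
  Module.Finite.map _ _

lemma boundaries_le_cycles (I : Ideal (MvPolynomial σ k)) (i : ℕ) (j : σ →₀ ℕ) :
    Submodule.map (koszulD k σ) (kChain k σ I (i + 1) j) ≤ koszulCycles k σ I i j := by
  rintro _ ⟨c, hc, rfl⟩
  exact Submodule.mem_inf.mpr ⟨koszulD_mem_kChain hc, LinearMap.mem_ker.mpr (koszulD_koszulD c)⟩

/-- `β + dim B = dim Z` -/
lemma betti_add_eq (I : Ideal (MvPolynomial σ k)) (i : ℕ) (j : σ →₀ ℕ) :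
    bettiNumber k σ I i j +
      Module.finrank k (Submodule.map (koszulD k σ) (kChain k σ I (i + 1) j)) =
      Module.finrank k (koszulCycles k σ I i j) := by
  have h1 : Module.finrank k
      (Submodule.comap (koszulCycles k σ I i j).subtype
        ((kChain k σ I (i + 1) j).map (koszulD k σ))) =
      Module.finrank k (Submodule.map (koszulD k σ) (kChain k σ I (i + 1) j)) :=
    (Submodule.comapSubtypeEquivOfLe (boundaries_le_cycles I i j)).finrank_eq
  rw [bettiNumber, ← h1]
  exact Submodule.finrank_quotient_add_finrank _

/-- rank-nullity : `dim B_i + dim Z_{i+1} = dim C_{i+1}` -/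
lemma rank_nullity_eq (I : Ideal (MvPolynomial σ k)) (i : ℕ) (j : σ →₀ ℕ) :
    Module.finrank k (Submodule.map (koszulD k σ) (kChain k σ I (i + 1) j)) +
      Module.finrank k (koszulCycles k σ I (i + 1) j) =
      Module.finrank k (kChain k σ I (i + 1) j) := by
  set φ := (koszulD k σ).domRestrict (kChain k σ I (i + 1) j) with hφ
  have hrange : LinearMap.range φ = Submodule.map (koszulD k σ) (kChain k σ I (i + 1) j) :=
    LinearMap.range_domRestrict _ _
  have hker : Module.finrank k (LinearMap.ker φ) =
      Module.finrank k (koszulCycles k σ I (i + 1) j) := by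
    have hker_eq : LinearMap.ker φ =
        Submodule.comap (kChain k σ I (i + 1) j).subtype (koszulCycles k σ I (i + 1) j) := by
      ext x
      simp only [LinearMap.mem_ker, hφ, LinearMap.domRestrict_apply, Submodule.mem_comap,
        koszulCycles, Submodule.mem_inf, Submodule.coe_subtype]
      exact ⟨fun h => ⟨x.2, h⟩, fun h => h.2⟩
    rw [hker_eq]
    exact (Submodule.comapSubtypeEquivOfLe (inf_le_left :
      koszulCycles k σ I (i + 1) j ≤ kChain k σ I (i + 1) j)).finrank_eq
  rw [← hrange, ← hker]
  exact LinearMap.finrank_range_add_finrank_ker φ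

lemma kChain_sup_eq (hJ : IsMonomialIdeal k σ J) (hK : IsMonomialIdeal k σ K) :
    kChain k σ (J + K) i j = kChain k σ J i j ⊔ kChain k σ K i j := by
  apply le_antisymm
  · intro c hc
    rw [show c = bsProj J j c + (c - bsProj J j c) by abel]
    exact Submodule.add_mem_sup (bsProj_mem hc) (bsProj_compl_mem hJ hK hc)
  · refine sup_le (kChain_mono ?_) (kChain_mono ?_)
    · rw [Ideal.add_eq_sup]; exact le_sup_left
    · rw [Ideal.add_eq_sup]; exact le_sup_right

lemma koszulCycles_inf :
    koszulCycles k σ J i j ⊓ koszulCycles k σ K i j = koszulCycles k σ (J ⊓ K) i j := by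
  rw [koszulCycles, koszulCycles, koszulCycles, kChain_inf]
  rw [inf_assoc, inf_left_comm (LinearMap.ker (koszulD k σ)), inf_idem, ← inf_assoc]

lemma koszulCycles_zero (I : Ideal (MvPolynomial σ k)) (j : σ →₀ ℕ) :
    koszulCycles k σ I 0 j = kChain k σ I 0 j := by
  rw [koszulCycles, inf_eq_left]
  intro c hc
  rw [LinearMap.mem_ker]
  exact koszulD_zero_chain hc

end BS5

section BS6
variable {k : Type*} [Field k] {σ : Type*} [Fintype σ] [DecidableEq σ] [LinearOrder σ]
variable {J K : Ideal (MvPolynomial σ k)} {i : ℕ} {j : σ →₀ ℕ}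

lemma bsConn_mem (hJ : IsMonomialIdeal k σ J) (hK : IsMonomialIdeal k σ K)
    {z : Finset σ → MvPolynomial σ k} (hz : z ∈ koszulCycles k σ (J + K) (i + 1) j) :
    koszulD k σ (bsProj J j z) ∈ koszulCycles k σ (J ⊓ K) i j := by
  obtain ⟨hzc, hzk⟩ := Submodule.mem_inf.mp hz
  have hDz : koszulD k σ z = 0 := LinearMap.mem_ker.mp hzk
  have h1 : bsProj J j z ∈ kChain k σ J (i + 1) j := bsProj_mem hzc
  have h2 : z - bsProj J j z ∈ kChain k σ K (i + 1) j := bsProj_compl_mem hJ hK hzc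
  have hJside : koszulD k σ (bsProj J j z) ∈ kChain k σ J i j := koszulD_mem_kChain h1
  have hKside : koszulD k σ (bsProj J j z) ∈ kChain k σ K i j := by
    have hmem := koszulD_mem_kChain h2
    have heq : koszulD k σ (bsProj J j z) = -(koszulD k σ (z - bsProj J j z)) := by
      rw [map_sub, hDz, zero_sub, neg_neg]
    rw [heq]
    exact Submodule.neg_mem _ hmem
  refine Submodule.mem_inf.mpr ⟨?_, LinearMap.mem_ker.mpr (koszulD_koszulD _)⟩
  rw [kChain_inf]
  exact ⟨hJside, hKside⟩

/-- the connecting homomorphism -/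
noncomputable def bsConn (hJ : IsMonomialIdeal k σ J) (hK : IsMonomialIdeal k σ K)
    (i : ℕ) (j : σ →₀ ℕ) :
    ↥(koszulCycles k σ (J + K) (i + 1) j) →ₗ[k] koszulHomology k σ (J ⊓ K) i j :=
  (Submodule.mkQ _) ∘ₗ
    (LinearMap.codRestrict (koszulCycles k σ (J ⊓ K) i j)
      ((koszulD k σ) ∘ₗ (bsProj J j) ∘ₗ (koszulCycles k σ (J + K) (i + 1) j).subtype)
      (fun z => bsConn_mem hJ hK z.2))

lemma bsConn_apply (hJ : IsMonomialIdeal k σ J) (hK : IsMonomialIdeal k σ K)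
    (z : ↥(koszulCycles k σ (J + K) (i + 1) j)) :
    bsConn hJ hK i j z = Submodule.mkQ _
      ⟨koszulD k σ (bsProj J j z.1), bsConn_mem hJ hK z.2⟩ := rfl

lemma koszulCycles_le_of_le {A B : Ideal (MvPolynomial σ k)} (h : A ≤ B) :
    koszulCycles k σ A i j ≤ koszulCycles k σ B i j :=
  inf_le_inf_right _ (kChain_mono h)

lemma cycles_sup_le : koszulCycles k σ J (i + 1) j ⊔ koszulCycles k σ K (i + 1) j ≤
    koszulCycles k σ (J + K) (i + 1) j := by
  refine sup_le (koszulCycles_le_of_le ?_) (koszulCycles_le_of_le ?_)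
  · rw [Ideal.add_eq_sup]; exact le_sup_left
  · rw [Ideal.add_eq_sup]; exact le_sup_right

lemma bsConn_ker (hJ : IsMonomialIdeal k σ J) (hK : IsMonomialIdeal k σ K) :
    LinearMap.ker (bsConn hJ hK i j) =
      Submodule.comap (koszulCycles k σ (J + K) (i + 1) j).subtype
        (koszulCycles k σ J (i + 1) j ⊔ koszulCycles k σ K (i + 1) j) := by
  ext z
  obtain ⟨hzc, hzk⟩ := Submodule.mem_inf.mp z.2
  have hDz : koszulD k σ z.1 = 0 := LinearMap.mem_ker.mp hzk
  constructor
  · intro hz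
    rw [LinearMap.mem_ker, bsConn_apply, Submodule.mkQ_apply,
      Submodule.Quotient.mk_eq_zero, Submodule.mem_comap] at hz
    obtain ⟨w, hw, hDw0⟩ := hz
    have hDw : koszulD k σ w = koszulD k σ (bsProj J j z.1) := hDw0
    rw [Submodule.mem_comap]
    refine Submodule.mem_sup.mpr ⟨bsProj J j z.1 - w, ?_, z.1 - bsProj J j z.1 + w, ?_, by abel⟩
    · refine Submodule.mem_inf.mpr ⟨Submodule.sub_mem _ (bsProj_mem hzc)
        (kChain_mono inf_le_left hw), LinearMap.mem_ker.mpr ?_⟩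
      rw [map_sub, hDw]
      exact sub_self _
    · refine Submodule.mem_inf.mpr ⟨Submodule.add_mem _ (bsProj_compl_mem hJ hK hzc)
        (kChain_mono inf_le_right hw), LinearMap.mem_ker.mpr ?_⟩
      rw [map_add, map_sub, hDz, hDw]
      abel
  · intro hz
    rw [Submodule.mem_comap] at hz
    obtain ⟨p, hp, q, hq, hpq⟩ := Submodule.mem_sup.mp hz
    obtain ⟨hpc, hpk⟩ := Submodule.mem_inf.mp hp
    obtain ⟨hqc, hqk⟩ := Submodule.mem_inf.mp hq
    rw [LinearMap.mem_ker, bsConn_apply, Submodule.mkQ_apply,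
      Submodule.Quotient.mk_eq_zero, Submodule.mem_comap]
    have hsub : (koszulCycles k σ (J ⊓ K) i j).subtype
        ⟨koszulD k σ (bsProj J j z.1), bsConn_mem hJ hK z.2⟩ =
        koszulD k σ (bsProj J j z.1) := rfl
    rw [hsub]
    have hdecomp : bsProj J j z.1 = p + bsProj J j q := by
      have : z.1 = p + q := hpq.symm
      rw [this, map_add, bsProj_eq_self hpc]
    refine Submodule.mem_map.mpr ⟨bsProj J j q, bsProj_inf_mem hqc, ?_⟩
    rw [hdecomp, map_add, LinearMap.mem_ker.mp hpk, zero_add]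

end BS6

section BS7
variable {k : Type*} [Field k] {σ : Type*} [Fintype σ] [DecidableEq σ] [LinearOrder σ]
variable {J K : Ideal (MvPolynomial σ k)} {i : ℕ} {j : σ →₀ ℕ}

lemma cycles_eq_boundaries_of_betti_zero {A : Ideal (MvPolynomial σ k)}
    (h : bettiNumber k σ A i j = 0) :
    koszulCycles k σ A i j = Submodule.map (koszulD k σ) (kChain k σ A (i + 1) j) := by
  have := betti_add_eq A i j
  rw [h, zero_add] at this
  exact (Submodule.eq_of_le_of_finrank_le (boundaries_le_cycles A i j) this.ge).symm

lemma bsConn_surjective (hJ : IsMonomialIdeal k σ J) (hK : IsMonomialIdeal k σ K)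
    (hv : 0 < bettiNumber k σ (J ⊓ K) i j →
      bettiNumber k σ J i j = 0 ∧ bettiNumber k σ K i j = 0) :
    Function.Surjective (bsConn hJ hK i j) := by
  by_cases h0 : bettiNumber k σ (J ⊓ K) i j = 0
  · have : Subsingleton (koszulHomology k σ (J ⊓ K) i j) :=
      Module.finrank_zero_iff.mp h0
    intro y
    exact ⟨0, Subsingleton.elim _ _⟩
  · obtain ⟨hvJ, hvK⟩ := hv (Nat.pos_of_ne_zero h0)
    intro y
    obtain ⟨w, rfl⟩ := Submodule.mkQ_surjective _ y
    obtain ⟨hwc, hwk⟩ := Submodule.mem_inf.mp w.2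
    have hwJ : w.1 ∈ koszulCycles k σ J i j :=
      Submodule.mem_inf.mpr ⟨kChain_mono inf_le_left hwc, hwk⟩
    have hwK : w.1 ∈ koszulCycles k σ K i j :=
      Submodule.mem_inf.mpr ⟨kChain_mono inf_le_right hwc, hwk⟩
    rw [cycles_eq_boundaries_of_betti_zero hvJ] at hwJ
    rw [cycles_eq_boundaries_of_betti_zero hvK] at hwK
    obtain ⟨u, hu, hDu⟩ := hwJ
    obtain ⟨v, hv', hDv⟩ := hwK
    have hu' : (u : Finset σ → MvPolynomial σ k) ∈ kChain k σ J (i + 1) j := hu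
    have hv'' : (v : Finset σ → MvPolynomial σ k) ∈ kChain k σ K (i + 1) j := hv'
    have hzmem : u - v ∈ koszulCycles k σ (J + K) (i + 1) j := by
      refine Submodule.mem_inf.mpr ⟨Submodule.sub_mem _
        (kChain_mono (by rw [Ideal.add_eq_sup]; exact le_sup_left) hu')
        (kChain_mono (by rw [Ideal.add_eq_sup]; exact le_sup_right) hv''), ?_⟩
      rw [LinearMap.mem_ker, map_sub, hDu, hDv, sub_self]
    refine ⟨⟨u - v, hzmem⟩, ?_⟩
    rw [bsConn_apply, Submodule.mkQ_apply, Submodule.mkQ_apply, Submodule.Quotient.eq,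
      Submodule.mem_comap]
    have hcoe : (koszulCycles k σ (J ⊓ K) i j).subtype
        (⟨koszulD k σ (bsProj J j (u - v)), bsConn_mem hJ hK hzmem⟩ - w) =
        koszulD k σ (bsProj J j (u - v)) - w.1 := rfl
    rw [hcoe]
    have hproj : bsProj J j (u - v) = u - bsProj J j v := by
      rw [map_sub, bsProj_eq_self hu']
    refine Submodule.mem_map.mpr ⟨-(bsProj J j v), Submodule.neg_mem _ (bsProj_inf_mem hv''), ?_⟩
    rw [map_neg, hproj, map_sub, hDu]
    abel

lemma delta_dim (hJ : IsMonomialIdeal k σ J) (hK : IsMonomialIdeal k σ K)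
    (hv : 0 < bettiNumber k σ (J ⊓ K) i j →
      bettiNumber k σ J i j = 0 ∧ bettiNumber k σ K i j = 0) :
    Module.finrank k (koszulCycles k σ (J + K) (i + 1) j) =
      Module.finrank k
        ↥(koszulCycles k σ J (i + 1) j ⊔ koszulCycles k σ K (i + 1) j) +
        bettiNumber k σ (J ⊓ K) i j := by
  have h1 := LinearMap.finrank_range_add_finrank_ker (bsConn hJ hK i j)
  have hrange : Module.finrank k (LinearMap.range (bsConn hJ hK i j)) =
      bettiNumber k σ (J ⊓ K) i j := by
    rw [LinearMap.range_eq_top.mpr (bsConn_surjective hJ hK hv), bettiNumber]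
    exact finrank_top k _
  have hker : Module.finrank k (LinearMap.ker (bsConn hJ hK i j)) =
      Module.finrank k
        ↥(koszulCycles k σ J (i + 1) j ⊔ koszulCycles k σ K (i + 1) j) := by
    rw [bsConn_ker hJ hK]
    exact (Submodule.comapSubtypeEquivOfLe
      (p := koszulCycles k σ J (i + 1) j ⊔ koszulCycles k σ K (i + 1) j)
      (q := koszulCycles k σ (J + K) (i + 1) j) cycles_sup_le).finrank_eq
  omega

lemma cycles_zero_sup (hJ : IsMonomialIdeal k σ J) (hK : IsMonomialIdeal k σ K) :
    koszulCycles k σ (J + K) 0 j = koszulCycles k σ J 0 j ⊔ koszulCycles k σ K 0 j := by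
  rw [koszulCycles_zero, koszulCycles_zero, koszulCycles_zero, kChain_sup_eq hJ hK]

end BS7

section BS8
variable {k : Type*} [Field k] {σ : Type*} [Fintype σ] [DecidableEq σ] [LinearOrder σ]
variable {J K : Ideal (MvPolynomial σ k)}

lemma kChain_dim_eq (hJ : IsMonomialIdeal k σ J) (hK : IsMonomialIdeal k σ K) (m : ℕ)
    (j : σ →₀ ℕ) :
    Module.finrank k (kChain k σ (J + K) m j) + Module.finrank k (kChain k σ (J ⊓ K) m j) =
      Module.finrank k (kChain k σ J m j) + Module.finrank k (kChain k σ K m j) := by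
  rw [kChain_sup_eq hJ hK, kChain_inf]
  exact Submodule.finrank_sup_add_finrank_inf_eq _ _

lemma cycles_dim_eq (m : ℕ) (j : σ →₀ ℕ) :
    Module.finrank k ↥(koszulCycles k σ J m j ⊔ koszulCycles k σ K m j) +
      Module.finrank k (koszulCycles k σ (J ⊓ K) m j) =
      Module.finrank k (koszulCycles k σ J m j) + Module.finrank k (koszulCycles k σ K m j) := by
  rw [← koszulCycles_inf]
  exact Submodule.finrank_sup_add_finrank_inf_eq _ _

end BS8

/-- if `I = J + K` with `G(I)` the disjoint union of `G(J)` and `G(K)`,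
and whenever `β_{i,j}(J ∩ K) > 0` we have `β_{i,j}(J) = β_{i,j}(K) = 0` (for all `i`
and all multidegrees `j`), then
`β_{i,j}(I) = β_{i,j}(J) + β_{i,j}(K) + β_{i-1,j}(J ∩ K)` for all `i` and `j`
(with the convention `β_{-1,j} = 0`). -/
theorem betti_splitting_of_disjoint_betti
    {k : Type*} [Field k] {n : ℕ}
    (I J K : Ideal (MvPolynomial (Fin n) k))
    (hI : IsMonomialIdeal k (Fin n) I) (hJ : IsMonomialIdeal k (Fin n) J)
    (hK : IsMonomialIdeal k (Fin n) K)
    (hsum : I = J + K)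
    (hgens : minGens k (Fin n) I = minGens k (Fin n) J ∪ minGens k (Fin n) K)
    (hdisj : Disjoint (minGens k (Fin n) J) (minGens k (Fin n) K))
    (hvanish : ∀ (i : ℕ) (j : Fin n →₀ ℕ), 0 < bettiNumber k (Fin n) (J ⊓ K) i j →
      bettiNumber k (Fin n) J i j = 0 ∧ bettiNumber k (Fin n) K i j = 0) :
    ∀ (i : ℕ) (j : Fin n →₀ ℕ),
      bettiNumber k (Fin n) I i j =
        bettiNumber k (Fin n) J i j + bettiNumber k (Fin n) K i j +
          (if i = 0 then 0 else bettiNumber k (Fin n) (J ⊓ K) (i - 1) j) := by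
  subst hsum
  intro i j
  -- common facts
  have hbJ := betti_add_eq (k := k) (σ := Fin n) J i j
  have hbK := betti_add_eq (k := k) (σ := Fin n) K i j
  have hbI := betti_add_eq (k := k) (σ := Fin n) (J + K) i j
  have hbM := betti_add_eq (k := k) (σ := Fin n) (J ⊓ K) i j
  have hrJ := rank_nullity_eq (k := k) (σ := Fin n) J i j
  have hrK := rank_nullity_eq (k := k) (σ := Fin n) K i j
  have hrI := rank_nullity_eq (k := k) (σ := Fin n) (J + K) i j
  have hrM := rank_nullity_eq (k := k) (σ := Fin n) (J ⊓ K) i j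
  have hc1 := kChain_dim_eq hJ hK (i + 1) j
  have hz1 := cycles_dim_eq (k := k) (σ := Fin n) (J := J) (K := K) (i + 1) j
  have hd1 := delta_dim (i := i) (j := j) hJ hK (hvanish i j)
  rcases i with _ | i'
  · -- i = 0
    have hz0eq : Module.finrank k (koszulCycles k (Fin n) (J + K) 0 j) =
        Module.finrank k ↥(koszulCycles k (Fin n) J 0 j ⊔ koszulCycles k (Fin n) K 0 j) := by
      rw [cycles_zero_sup hJ hK]
    have hz0 := cycles_dim_eq (k := k) (σ := Fin n) (J := J) (K := K) 0 j
    rw [if_pos rfl]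
    omega
  · -- i = i' + 1
    have hd0 := delta_dim (i := i') (j := j) hJ hK (hvanish i' j)
    have hz0 := cycles_dim_eq (k := k) (σ := Fin n) (J := J) (K := K) (i' + 1) j
    rw [if_neg (Nat.succ_ne_zero i'), Nat.add_sub_cancel]
    omega
end

section
/- Let G be a bipartite graph on {x_1,...,x_n} ∪ {y_1,...,y_n} satisfying the Herzog–Hibi conditions, and let N(y_n) = {x_{i_1},...,x_{i_s}, x_n} be the set of neighbors of y_n. Then in the graph G \ ({y_n} ∪ N(y_n)), the vertices y_{i_1},...,y_{i_s} are all isolated, and after removing these isolated vertices, the resulting graph on the remaining paired vertices again satisfies the Herzog–Hibi conditions. -/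
set_option linter.unusedSectionVars false
set_option linter.unusedVariables false

/-- The Herzog–Hibi conditions for a bipartite graph on `{x_1,…,x_n} ∪ {y_1,…,y_n}`
(`x_i = Sum.inl i`, `y_j = Sum.inr j`): the graph is bipartite with respect to this
partition, `{x_i, y_i}` is an edge for all `i`, `{x_i, y_j} ∈ E` implies `i ≤ j`, and
`{x_i,y_j}, {x_j,y_l} ∈ E` with `i < j < l` implies `{x_i, y_l} ∈ E`. -/
def IsHHGraph {n : ℕ} (G : SimpleGraph (Fin n ⊕ Fin n)) : Prop :=
  (∀ i i' : Fin n, ¬ G.Adj (Sum.inl i) (Sum.inl i')) ∧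
  (∀ i i' : Fin n, ¬ G.Adj (Sum.inr i) (Sum.inr i')) ∧
  (∀ i : Fin n, G.Adj (Sum.inl i) (Sum.inr i)) ∧
  (∀ i j : Fin n, G.Adj (Sum.inl i) (Sum.inr j) → i ≤ j) ∧
  (∀ i j l : Fin n, i < j → j < l → G.Adj (Sum.inl i) (Sum.inr j) →
    G.Adj (Sum.inl j) (Sum.inr l) → G.Adj (Sum.inl i) (Sum.inr l))

/-- Delete a set of vertices from a graph (removing all incident edges), keeping the
ambient vertex type. -/
def deleteVerts {V : Type*} (G : SimpleGraph V) (D : Set V) : SimpleGraph V where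
  Adj a b := G.Adj a b ∧ a ∉ D ∧ b ∉ D
  symm := ⟨fun a b h => ⟨G.symm.symm _ _ h.1, h.2.2, h.2.1⟩⟩
  loopless := ⟨fun a h => G.loopless.irrefl a h.1⟩

/-- A vertex cover of `G`. -/
def IsVertexCover {V : Type*} (G : SimpleGraph V) (W : Set V) : Prop :=
  ∀ a b, G.Adj a b → a ∈ W ∨ b ∈ W

/-- A minimal vertex cover of `G`. -/
def IsMinVertexCover {V : Type*} (G : SimpleGraph V) (W : Set V) : Prop :=
  IsVertexCover G W ∧ ∀ W' ⊆ W, IsVertexCover G W' → W' = W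

/-- The cover ideal `I(G)^∨` of a graph, generated by the squarefree monomials
corresponding to the minimal vertex covers of `G`; it is the Alexander dual of the
edge ideal. -/
noncomputable def coverIdeal {V : Type*} [Fintype V] (k : Type*) [Field k]
    (G : SimpleGraph V) : Ideal (MvPolynomial V k) :=
  Ideal.span {p | ∃ W : Finset V, IsMinVertexCover G ↑W ∧ p = ∏ v ∈ W, MvPolynomial.X v}

/-- The edge ideal of a simple graph. -/
noncomputable def edgeIdeal {V : Type*} (k : Type*) [Field k] (G : SimpleGraph V) :
    Ideal (MvPolynomial V k) :=
  Ideal.span {p | ∃ u v, G.Adj u v ∧ p = MvPolynomial.X u * MvPolynomial.X v}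

/-!
The Herzog–Hibi transitivity condition, relaxed to non-strict inequalities (the degenerate
cases are trivial), says that `x_i ∈ N(y_l)` forces `N(y_i) ⊆ N(y_l)`. So once `N(y_n)` is
deleted, every `y_i` with `x_i ∈ N(y_n)` has lost all its neighbours. Deleting whole pairs
`{x_i, y_i}` keeps the remaining pairs intact, and the other Herzog–Hibi conditions pass to
induced subgraphs.
-/

@[simp]
theorem deleteVerts_adj {V : Type*} (G : SimpleGraph V) (D : Set V) (a b : V) :
    (deleteVerts G D).Adj a b ↔ G.Adj a b ∧ a ∉ D ∧ b ∉ D :=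
  Iff.rfl

namespace IsHHGraph

variable {m : ℕ} {G : SimpleGraph (Fin m ⊕ Fin m)}

theorem adj_inl_inr_trans (hG : IsHHGraph G) {i j l : Fin m}
    (hji : G.Adj (Sum.inl j) (Sum.inr i)) (hil : G.Adj (Sum.inl i) (Sum.inr l)) :
    G.Adj (Sum.inl j) (Sum.inr l) := by
  obtain ⟨-, -, -, hle, htrans⟩ := hG
  rcases (hle j i hji).lt_or_eq with hj | rfl
  · rcases (hle i l hil).lt_or_eq with hl | rfl
    · exact htrans j i l hj hl hji hil
    · exact hji
  · exact hil

theorem not_adj_deleteVerts_inr (hG : IsHHGraph G) {i l : Fin m} {D : Set (Fin m ⊕ Fin m)}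
    (hil : G.Adj (Sum.inl i) (Sum.inr l))
    (hD : ∀ j, G.Adj (Sum.inl j) (Sum.inr l) → Sum.inl j ∈ D) (v : Fin m ⊕ Fin m) :
    ¬ (deleteVerts G D).Adj (Sum.inr i) v := by
  rintro ⟨hadj, -, hv⟩
  rcases v with j | j
  · exact hv (hD j (hG.adj_inl_inr_trans hadj.symm hil))
  · exact hG.2.1 i j hadj

theorem deleteVerts_pairs (hG : IsHHGraph G) (P : Fin m → Prop) :
    let H := deleteVerts G {w | ∃ i, P i ∧ (w = Sum.inl i ∨ w = Sum.inr i)}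
    (∀ i i' : Fin m, ¬ H.Adj (Sum.inl i) (Sum.inl i')) ∧
    (∀ i i' : Fin m, ¬ H.Adj (Sum.inr i) (Sum.inr i')) ∧
    (∀ i : Fin m, ¬ P i → H.Adj (Sum.inl i) (Sum.inr i)) ∧
    (∀ i j : Fin m, H.Adj (Sum.inl i) (Sum.inr j) → i ≤ j) ∧
    (∀ i j l : Fin m, i < j → j < l → H.Adj (Sum.inl i) (Sum.inr j) →
      H.Adj (Sum.inl j) (Sum.inr l) → H.Adj (Sum.inl i) (Sum.inr l)) := by
  obtain ⟨hxx, hyy, hdiag, hle, htrans⟩ := hG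
  refine ⟨fun i i' h ↦ hxx i i' h.1, fun i i' h ↦ hyy i i' h.1, fun i hi ↦ ?_,
    fun i j h ↦ hle i j h.1, fun i j l hij hjl h₁ h₂ ↦
      ⟨htrans i j l hij hjl h₁.1 h₂.1, h₁.2.1, h₂.2.2⟩⟩
  simp only [deleteVerts_adj, Set.mem_ofPred_eq, Sum.inl.injEq, Sum.inr.injEq,
    reduceCtorEq, or_false, false_or, exists_eq_right']
  exact ⟨hdiag i, hi, hi⟩

end IsHHGraph

/-- let `G` satisfy the Herzog–Hibi conditions and let
`N(y_n) = {x_{i_1},…,x_{i_s}, x_n}`.  In `G \ ({y_n} ∪ N(y_n))` the vertices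
`y_{i_1},…,y_{i_s}` are all isolated, and after removing these isolated vertices —
i.e., passing to the graph obtained by deleting the vertex pairs `{x_i, y_i}` for all
`x_i ∈ N(y_n)` — the resulting graph on the remaining paired vertices again satisfies
the Herzog–Hibi conditions (with the inherited labeling). -/
theorem remove_neighborhood_of_last_y {n : ℕ}
    (G : SimpleGraph (Fin (n + 1) ⊕ Fin (n + 1))) (hG : IsHHGraph G) :
    -- the vertices `y_i` for `x_i ∈ N(y_n)` are isolated in `G \ ({y_n} ∪ N(y_n))`
    (∀ i : Fin (n + 1), G.Adj (Sum.inl i) (Sum.inr (Fin.last n)) →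
      ∀ v, ¬ (deleteVerts G
        ({Sum.inr (Fin.last n)} ∪
          {w | ∃ i' : Fin (n + 1),
            G.Adj (Sum.inl i') (Sum.inr (Fin.last n)) ∧ w = Sum.inl i'})).Adj
        (Sum.inr i) v) ∧
    -- the graph obtained by deleting the pairs `{x_i, y_i}` for `x_i ∈ N(y_n)`
    -- satisfies the Herzog–Hibi conditions on the remaining indices
    (let H := deleteVerts G
      {w | ∃ i : Fin (n + 1), G.Adj (Sum.inl i) (Sum.inr (Fin.last n)) ∧
        (w = Sum.inl i ∨ w = Sum.inr i)}
     (∀ i i' : Fin (n + 1), ¬ H.Adj (Sum.inl i) (Sum.inl i')) ∧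
     (∀ i i' : Fin (n + 1), ¬ H.Adj (Sum.inr i) (Sum.inr i')) ∧
     (∀ i : Fin (n + 1), ¬ G.Adj (Sum.inl i) (Sum.inr (Fin.last n)) →
        H.Adj (Sum.inl i) (Sum.inr i)) ∧
     (∀ i j : Fin (n + 1), H.Adj (Sum.inl i) (Sum.inr j) → i ≤ j) ∧
     (∀ i j l : Fin (n + 1), i < j → j < l → H.Adj (Sum.inl i) (Sum.inr j) →
        H.Adj (Sum.inl j) (Sum.inr l) → H.Adj (Sum.inl i) (Sum.inr l))) :=
  ⟨fun _ hi ↦ hG.not_adj_deleteVerts_inr hi fun j hj ↦ Or.inr ⟨j, hj, rfl⟩,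
    hG.deleteVerts_pairs _⟩
end

section
/- Let G be a bipartite graph on {x_1,...,x_n} ∪ {y_1,...,y_n} satisfying the Herzog–Hibi conditions, with N(y_n) = {x_{i_1},...,x_{i_s}, x_n}. Then every minimal vertex cover of G contains exactly one of x_n and y_n, and the cover ideal decomposes as I(G)^∨ = y_n · I(G \ {y_n})^∨ + (x_{i_1}···x_{i_s} x_n) · I(G \ ({y_n} ∪ N(y_n)))^∨. -/
set_option linter.unusedSectionVars false
set_option linter.unusedVariables false

/-!
The vertex `x_n` is a leaf of `G` hanging at `y_n`: bipartiteness and condition (b) leave `y_n`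
as its only neighbour. Hence a minimal vertex cover `W` contains exactly one of them: it must
cover the edge `x_n y_n`, and a vertex all of whose neighbours lie in `W` is superfluous.

If `y_n ∈ W`, then `W \ {y_n}` is a minimal cover of `G \ {y_n}`; conversely every minimal
cover of `G \ {y_n}` misses the isolated vertex `x_n`, so adding `y_n` back gives a minimal
cover of `G`. If `y_n ∉ W`, then `N(y_n) ⊆ W` and `W \ N(y_n)` is a minimal cover of
`G \ N[y_n]`; conversely adding `N(y_n)` to a minimal cover of `G \ N[y_n]` gives a minimal
cover of `G`, each added vertex being needed for its edge to `y_n`. Thus the monomial generators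
of `I(G)^∨` are exactly those of the two summands.
-/

open MvPolynomial
open scoped Pointwise

section VertexCover

variable {V : Type*} {G : SimpleGraph V} {W W' : Set V}

theorem IsVertexCover.neighborSet_subset (hW : IsVertexCover G W) {y : V} (hy : y ∉ W) :
    G.neighborSet y ⊆ W :=
  fun b hb => (hW y b hb).resolve_left hy

theorem IsMinVertexCover.notMem_of_forall_adj_mem (hW : IsMinVertexCover G W) {v : V}
    (hv : ∀ u, G.Adj v u → u ∈ W) : v ∉ W := by
  intro hvW
  have hcov : IsVertexCover G (W \ {v}) := by
    intro a b hab
    rcases eq_or_ne a v with rfl | ha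
    · exact Or.inr ⟨hv b hab, hab.ne'⟩
    rcases eq_or_ne b v with rfl | hb
    · exact Or.inl ⟨hv a hab.symm, hab.ne⟩
    exact (hW.1 a b hab).imp (⟨·, ha⟩) (⟨·, hb⟩)
  exact (hW.2 _ Set.sdiff_subset hcov ▸ hvW).2 rfl

theorem IsMinVertexCover.disjoint_of_deleteVerts {D : Set V}
    (hW : IsMinVertexCover (deleteVerts G D) W) : Disjoint D W :=
  Set.disjoint_left.2 fun _ hvD =>
    hW.notMem_of_forall_adj_mem fun _ h => absurd hvD h.2.1

theorem IsMinVertexCover.deleteVerts_sdiff {D : Set V} (hW : IsMinVertexCover G W)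
    (hD : ∀ a b, G.Adj a b → a ∈ D → a ∈ W ∩ D ∨ b ∈ W ∩ D) :
    IsMinVertexCover (deleteVerts G D) (W \ D) := by
  refine ⟨fun a b hab => (hW.1 a b hab.1).imp (⟨·, hab.2.1⟩) (⟨·, hab.2.2⟩),
    fun U hU hUcov => ?_⟩
  have hcov : IsVertexCover G (U ∪ (W ∩ D)) := by
    intro a b hab
    by_cases ha : a ∈ D
    · exact (hD a b hab ha).imp Or.inr Or.inr
    by_cases hb : b ∈ D
    · exact (hD b a hab.symm hb).symm.imp Or.inr Or.inr
    exact (hUcov a b ⟨hab, ha, hb⟩).imp Or.inl Or.inl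
  have hEq := hW.2 _ (Set.union_subset (hU.trans Set.sdiff_subset) Set.inter_subset_left) hcov
  refine hU.antisymm fun v hv => ?_
  have hv' : v ∈ U ∪ (W ∩ D) := by rw [hEq]; exact hv.1
  exact hv'.resolve_right fun h => hv.2 h.2

theorem IsMinVertexCover.union_of_deleteVerts {D A : Set V}
    (hW' : IsMinVertexCover (deleteVerts G D) W') (hA : A ⊆ D)
    (hDA : ∀ a b, G.Adj a b → a ∈ D → a ∈ A ∨ b ∈ A)
    (hfree : ∀ a ∈ A, ∃ b, G.Adj a b ∧ b ∉ A ∪ W') :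
    IsMinVertexCover G (A ∪ W') := by
  constructor
  · intro a b hab
    by_cases ha : a ∈ D
    · exact (hDA a b hab ha).imp Or.inl Or.inl
    by_cases hb : b ∈ D
    · exact (hDA b a hab.symm hb).symm.imp Or.inl Or.inl
    exact (hW'.1 a b ⟨hab, ha, hb⟩).imp Or.inr Or.inr
  · intro U hU hUcov
    have hAU : A ⊆ U := fun a ha => by
      obtain ⟨b, hab, hb⟩ := hfree a ha
      exact (hUcov a b hab).resolve_right fun h => hb (hU h)
    have hcov : IsVertexCover (deleteVerts G D) (U \ A) := fun a b hab =>
      (hUcov a b hab.1).imp (⟨·, fun h => hab.2.1 (hA h)⟩) (⟨·, fun h => hab.2.2 (hA h)⟩)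
    have hEq := hW'.2 _ (fun v hv => (hU hv.1).resolve_left hv.2) hcov
    exact hU.antisymm (Set.union_subset hAU (hEq ▸ Set.sdiff_subset))

theorem IsMinVertexCover.deleteVerts_singleton_sdiff (hW : IsMinVertexCover G W) {y : V}
    (hy : y ∈ W) : IsMinVertexCover (deleteVerts G {y}) (W \ {y}) :=
  hW.deleteVerts_sdiff fun a _ _ ha => Or.inl ⟨(Set.mem_singleton_iff.1 ha) ▸ hy, ha⟩

theorem IsMinVertexCover.deleteVerts_closedNbhd_sdiff (hW : IsMinVertexCover G W) {y : V}
    (hy : y ∉ W) :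
    IsMinVertexCover (deleteVerts G (insert y (G.neighborSet y)))
      (W \ insert y (G.neighborSet y)) := by
  have hN := hW.1.neighborSet_subset hy
  refine hW.deleteVerts_sdiff fun a b hab ha => ?_
  rcases ha with rfl | ha
  · exact Or.inr ⟨hN hab, Or.inr hab⟩
  · exact Or.inl ⟨hN ha, Or.inr ha⟩

theorem IsMinVertexCover.insert_of_deleteVerts_singleton {x y : V} (hxy : G.Adj x y)
    (hx : ∀ u, G.Adj x u → u = y) (hW' : IsMinVertexCover (deleteVerts G {y}) W') :
    IsMinVertexCover G (insert y W') := by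
  have hxW' : x ∉ W' := hW'.notMem_of_forall_adj_mem fun u h => absurd (hx u h.1) h.2.2
  rw [Set.insert_eq]
  refine hW'.union_of_deleteVerts subset_rfl (fun a _ _ ha => Or.inl ha) fun a ha => ?_
  rw [Set.mem_singleton_iff.1 ha]
  exact ⟨x, hxy.symm, fun h => h.elim hxy.ne hxW'⟩

theorem IsMinVertexCover.neighborSet_union_of_deleteVerts {y : V}
    (hW' : IsMinVertexCover (deleteVerts G (insert y (G.neighborSet y))) W') :
    IsMinVertexCover G (G.neighborSet y ∪ W') := by
  have hyW' : y ∉ W' := hW'.disjoint_of_deleteVerts.notMem_of_mem_left (Set.mem_insert y _)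
  refine hW'.union_of_deleteVerts (Set.subset_insert _ _) (fun a b hab ha => ?_)
    fun a ha => ⟨y, ha.symm, fun h => h.elim G.irrefl hyW'⟩
  rcases ha with rfl | ha
  · exact Or.inr hab
  · exact Or.inl ha

theorem IsMinVertexCover.xor_of_leaf (hW : IsMinVertexCover G W) {x y : V} (hxy : G.Adj x y)
    (hx : ∀ u, G.Adj x u → u = y) : Xor (x ∈ W) (y ∈ W) := by
  by_cases hy : y ∈ W
  · exact Or.inr ⟨hy, hW.notMem_of_forall_adj_mem fun u hu => hx u hu ▸ hy⟩
  · exact Or.inl ⟨(hW.1 x y hxy).resolve_right hy, hy⟩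

end VertexCover

section CoverIdeal

variable {V : Type*} (k : Type*) [Field k]

def coverMonomials (G : SimpleGraph V) : Set (MvPolynomial V k) :=
  {p | ∃ W : Finset V, IsMinVertexCover G ↑W ∧ p = ∏ v ∈ W, X v}

theorem coverIdeal_eq_span [Fintype V] (G : SimpleGraph V) :
    coverIdeal k G = Ideal.span (coverMonomials k G) :=
  rfl

variable [Fintype V] [DecidableEq V] {G : SimpleGraph V} [DecidableRel G.Adj]

theorem coverMonomials_eq_of_leaf {x y : V} (hxy : G.Adj x y) (hx : ∀ u, G.Adj x u → u = y) :
    coverMonomials k G =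
      ({X y} : Set (MvPolynomial V k)) * coverMonomials k (deleteVerts G {y}) ∪
      {∏ v ∈ G.neighborFinset y, X v} *
        coverMonomials k (deleteVerts G (insert y (G.neighborSet y))) := by
  ext p
  simp only [coverMonomials, Set.mem_union, Set.mem_mul, Set.mem_singleton_iff, Set.mem_ofPred_eq]
  constructor
  · rintro ⟨W, hW, rfl⟩
    by_cases hy : y ∈ W
    · refine Or.inl ⟨_, rfl, _, ⟨W.erase y, ?_, rfl⟩, Finset.mul_prod_erase W _ hy⟩
      rw [Finset.coe_erase]
      exact hW.deleteVerts_singleton_sdiff hy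
    · have hN : G.neighborFinset y ⊆ W := by
        rw [← Finset.coe_subset, SimpleGraph.coe_neighborFinset]
        exact hW.1.neighborSet_subset hy
      refine Or.inr ⟨_, rfl, _, ⟨W \ insert y (G.neighborFinset y), ?_, rfl⟩, ?_⟩
      · rw [Finset.coe_sdiff, Finset.coe_insert, SimpleGraph.coe_neighborFinset]
        exact hW.deleteVerts_closedNbhd_sdiff hy
      · rw [Finset.sdiff_insert_of_notMem hy, mul_comm, Finset.prod_sdiff hN]
  · rintro (⟨_, rfl, _, ⟨W', hW', rfl⟩, rfl⟩ | ⟨_, rfl, _, ⟨W', hW', rfl⟩, rfl⟩)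
    · have hyW' : y ∉ W' := by
        exact_mod_cast hW'.disjoint_of_deleteVerts.notMem_of_mem_left (Set.mem_singleton y)
      refine ⟨insert y W', ?_, (Finset.prod_insert hyW').symm⟩
      rw [Finset.coe_insert]
      exact hW'.insert_of_deleteVerts_singleton hxy hx
    · have hNW' : Disjoint (G.neighborFinset y) W' := by
        rw [← Finset.disjoint_coe, SimpleGraph.coe_neighborFinset]
        exact hW'.disjoint_of_deleteVerts.mono_left (Set.subset_insert _ _)
      refine ⟨G.neighborFinset y ∪ W', ?_, (Finset.prod_union hNW').symm⟩
      rw [Finset.coe_union, SimpleGraph.coe_neighborFinset]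
      exact hW'.neighborSet_union_of_deleteVerts

theorem coverIdeal_eq_of_leaf {x y : V} (hxy : G.Adj x y) (hx : ∀ u, G.Adj x u → u = y) :
    coverIdeal k G =
      Ideal.span {X y} * coverIdeal k (deleteVerts G {y}) +
      Ideal.span {∏ v ∈ G.neighborFinset y, X v} *
        coverIdeal k (deleteVerts G (insert y (G.neighborSet y))) := by
  rw [coverIdeal_eq_span, coverIdeal_eq_span, coverIdeal_eq_span,
    coverMonomials_eq_of_leaf k hxy hx, Ideal.span_union, Ideal.span_mul_span',
    Ideal.span_mul_span', Submodule.add_eq_sup]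

end CoverIdeal

section SumGraph

variable {α β : Type*} {G : SimpleGraph (α ⊕ β)}

theorem neighborSet_inr_eq (h : ∀ j j', ¬ G.Adj (.inr j) (.inr j')) (j : β) :
    G.neighborSet (.inr j) = {w | ∃ i, G.Adj (.inl i) (.inr j) ∧ w = .inl i} := by
  ext (i | j')
  · simp [G.adj_comm (.inr j)]
  · simpa using h _ _

theorem neighborFinset_inr_eq [Fintype α] [Fintype β] [DecidableRel G.Adj]
    (h : ∀ j j', ¬ G.Adj (.inr j) (.inr j')) (j : β) :
    G.neighborFinset (.inr j) =
      (Finset.univ.filter fun i => G.Adj (.inl i) (.inr j)).map .inl := by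
  rw [← Finset.coe_inj, SimpleGraph.coe_neighborFinset, neighborSet_inr_eq h]
  ext; simp [eq_comm]

theorem IsHHGraph.eq_inr_last_of_adj_inl_last {n : ℕ}
    {G : SimpleGraph (Fin (n + 1) ⊕ Fin (n + 1))} (hG : IsHHGraph G) :
    ∀ u, G.Adj (.inl (Fin.last n)) u → u = .inr (Fin.last n)
  | .inl _, h => absurd h (hG.1 _ _)
  | .inr _, h => by rw [Fin.last_le_iff.1 (hG.2.2.2.1 _ _ h)]

end SumGraph

/-- for a Herzog–Hibi bipartite graph `G` with
`N(y_n) = {x_{i_1},…,x_{i_s}, x_n}`, every minimal vertex cover contains exactly one of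
`x_n` and `y_n`, and the cover ideal decomposes as
`I(G)^∨ = y_n · I(G \ {y_n})^∨ + (x_{i_1}⋯x_{i_s} x_n) · I(G \ ({y_n} ∪ N(y_n)))^∨`. -/
theorem coverIdeal_decomposition {n : ℕ} (k : Type*) [Field k]
    (G : SimpleGraph (Fin (n + 1) ⊕ Fin (n + 1))) [DecidableRel G.Adj]
    (hG : IsHHGraph G) :
    (∀ W : Set (Fin (n + 1) ⊕ Fin (n + 1)), IsMinVertexCover G W →
      Xor' (Sum.inl (Fin.last n) ∈ W) (Sum.inr (Fin.last n) ∈ W)) ∧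
    coverIdeal k G =
      Ideal.span {(MvPolynomial.X (Sum.inr (Fin.last n)) :
          MvPolynomial (Fin (n + 1) ⊕ Fin (n + 1)) k)} *
        coverIdeal k (deleteVerts G {Sum.inr (Fin.last n)}) +
      Ideal.span {∏ i ∈ Finset.univ.filter
            (fun i : Fin (n + 1) => G.Adj (Sum.inl i) (Sum.inr (Fin.last n))),
          (MvPolynomial.X (Sum.inl i) : MvPolynomial (Fin (n + 1) ⊕ Fin (n + 1)) k)} *
        coverIdeal k (deleteVerts G
          ({Sum.inr (Fin.last n)} ∪
            {w | ∃ i : Fin (n + 1),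
              G.Adj (Sum.inl i) (Sum.inr (Fin.last n)) ∧ w = Sum.inl i})) := by
  have hxy := hG.2.2.1 (Fin.last n)
  have hx := hG.eq_inr_last_of_adj_inl_last
  have hprod : ∏ i ∈ Finset.univ.filter (fun i => G.Adj (Sum.inl i) (Sum.inr (Fin.last n))),
      (X (Sum.inl i) : MvPolynomial _ k) = ∏ v ∈ G.neighborFinset (Sum.inr (Fin.last n)), X v := by
    rw [neighborFinset_inr_eq hG.2.1, Finset.prod_map]
    rfl
  rw [hprod, ← neighborSet_inr_eq hG.2.1, Set.singleton_union]
  exact ⟨fun W hW => hW.xor_of_leaf hxy hx, coverIdeal_eq_of_leaf k hxy hx⟩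
end
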